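/- Let L ≥ 2 and M ≥ 2 be integers and let a₀, a₁, …, a_M be integers such that |a_{k+1} − a_k| = 1 for every 0 ≤ k ≤ M − 1, a₀ = L, and a_M = 2L. Then there exist indices 0 ≤ m₁ < m₂ < … < m_{L−1} ≤ M − 2 such that for every j ∈ {1,…,L−1}: a_{m_j} = L + j − 1, a_{m_j + 1} = L + j, and a_{m_j + 2} = L + j + 1. -/

import Mathlib

/-!
Take `m_j` to be the last visit of the path to level `L + j - 1`. Since the path ends above that
level and cannot climb by more than one per step without passing through every level, it stays
strictly above `L + j - 1` after `m_j`; with steps of `±1` this forces the next two steps to go up.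
The path reaches level `L + j` again at `m_j + 1`, so the last visit to `L + j` is later:
`m_j < m_{j+1}`.
-/

section NearestNeighborPath

variable {a : ℕ → ℤ} {M : ℕ}

theorem exists_apply_eq_of_le_of_le (hup : ∀ k < M, a (k + 1) ≤ a k + 1) {s t : ℕ} {c : ℤ}
    (hst : s ≤ t) (htM : t ≤ M) (hs : a s ≤ c) (ht : c ≤ a t) :
    ∃ k, s ≤ k ∧ k ≤ t ∧ a k = c := by
  induction t, hst using Nat.le_induction with
  | base => exact ⟨s, le_rfl, le_rfl, le_antisymm hs ht⟩
  | succ t hst ih =>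
    by_cases hct : c ≤ a t
    · obtain ⟨k, hsk, hkt, hk⟩ := ih (by omega) hct
      exact ⟨k, hsk, by omega, hk⟩
    · have := hup t (by omega)
      exact ⟨t + 1, by omega, le_rfl, by omega⟩

/-- The last time `k ≤ M` at which `a k = c`; it is `0` if the path never visits `c`. -/
def lastVisit (a : ℕ → ℤ) (M : ℕ) (c : ℤ) : ℕ :=
  Nat.findGreatest (fun k => a k = c) M

theorem lastVisit_le (c : ℤ) : lastVisit a M c ≤ M :=
  Nat.findGreatest_le M

theorem le_lastVisit {c : ℤ} {k : ℕ} (hkM : k ≤ M) (hk : a k = c) : k ≤ lastVisit a M c :=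
  Nat.le_findGreatest hkM hk

theorem apply_lastVisit (hup : ∀ k < M, a (k + 1) ≤ a k + 1) {s : ℕ} {c : ℤ} (hsM : s ≤ M)
    (hs : a s ≤ c) (hcM : c ≤ a M) : a (lastVisit a M c) = c := by
  obtain ⟨k, -, hkM, hk⟩ := exists_apply_eq_of_le_of_le hup hsM le_rfl hs hcM
  exact Nat.findGreatest_spec (P := fun k => a k = c) hkM hk

theorem lt_apply_of_lastVisit_lt (hup : ∀ k < M, a (k + 1) ≤ a k + 1) {c : ℤ} (hcM : c < a M)
    {t : ℕ} (ht : lastVisit a M c < t) (htM : t ≤ M) : c < a t := by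
  by_contra! hat
  obtain ⟨k, htk, hkM, hk⟩ := exists_apply_eq_of_le_of_le hup htM le_rfl hat hcM.le
  exact absurd (le_lastVisit hkM hk) (by omega)

theorem eq_add_one_of_abs_sub_eq_one {x y : ℤ} (h : |x - y| = 1) (hyx : y - 1 < x) :
    x = y + 1 := by
  rcases abs_eq zero_le_one |>.1 h with h | h <;> omega

variable (hstep : ∀ k < M, |a (k + 1) - a k| = 1)
include hstep

theorem step_le_add_one_of_abs_sub_eq_one : ∀ k < M, a (k + 1) ≤ a k + 1 :=
  fun k hk => by linarith [le_abs_self (a (k + 1) - a k), hstep k hk]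

theorem apply_lastVisit_add_one {s : ℕ} {c : ℤ} (hsM : s ≤ M) (hs : a s ≤ c) (hcM : c < a M) :
    lastVisit a M c < M ∧ a (lastVisit a M c + 1) = c + 1 := by
  have hup := step_le_add_one_of_abs_sub_eq_one hstep
  have hvisit := apply_lastVisit hup hsM hs hcM.le
  have hlt : lastVisit a M c < M :=
    (lastVisit_le c).lt_of_ne fun h => hcM.ne' (h ▸ hvisit)
  have habove := lt_apply_of_lastVisit_lt hup hcM (Nat.lt_add_one _) hlt
  have := eq_add_one_of_abs_sub_eq_one (hstep _ hlt) (by omega)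
  exact ⟨hlt, by omega⟩

theorem lastVisit_double_jump {s : ℕ} {c : ℤ} (hsM : s ≤ M) (hs : a s ≤ c) (hcM : c + 1 < a M) :
    lastVisit a M c + 2 ≤ M ∧ a (lastVisit a M c + 1) = c + 1 ∧
      a (lastVisit a M c + 2) = c + 2 := by
  have hup := step_le_add_one_of_abs_sub_eq_one hstep
  obtain ⟨hlt, hsucc⟩ := apply_lastVisit_add_one hstep hsM hs (by omega)
  set m := lastVisit a M c
  have hlt' : m + 1 < M := (Nat.add_one_le_of_lt hlt).lt_of_ne fun h => hcM.ne' (h ▸ hsucc)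
  have habove : c < a (m + 1 + 1) := lt_apply_of_lastVisit_lt hup (by omega) (by omega) hlt'
  refine ⟨hlt', hsucc, ?_⟩
  show a (m + 1 + 1) = c + 2
  have := eq_add_one_of_abs_sub_eq_one (hstep (m + 1) hlt') (by omega)
  omega

theorem lastVisit_lt_lastVisit {s : ℕ} {c c' : ℤ} (hsM : s ≤ M) (hs : a s ≤ c) (hcc' : c < c')
    (hc'M : c' < a M) : lastVisit a M c < lastVisit a M c' := by
  have hup := step_le_add_one_of_abs_sub_eq_one hstep
  obtain ⟨hlt, hsucc⟩ := apply_lastVisit_add_one hstep hsM hs (hcc'.trans hc'M)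
  obtain ⟨k, hk, hkM, hkc'⟩ :=
    exists_apply_eq_of_le_of_le hup (Nat.add_one_le_of_lt hlt) le_rfl (by omega) hc'M.le
  exact hk.trans (le_lastVisit hkM hkc')

end NearestNeighborPath

theorem double_jumps_upward_exist_general
    (L M : ℕ) (a : ℕ → ℤ)
    (hstep : ∀ k, k < M → |a (k + 1) - a k| = 1)
    (h0 : a 0 = (L : ℤ)) (hMval : a M = 2 * (L : ℤ)) :
    ∃ m : Fin (L - 1) → ℕ, StrictMono m ∧ (∀ j, m j + 2 ≤ M) ∧
      ∀ j : Fin (L - 1),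
        a (m j) = (L : ℤ) + (j : ℕ) ∧
        a (m j + 1) = (L : ℤ) + (j : ℕ) + 1 ∧
        a (m j + 2) = (L : ℤ) + (j : ℕ) + 2 := by
  have hstart (j : Fin (L - 1)) : a 0 ≤ (L : ℤ) + (j : ℕ) := by omega
  have hend (j : Fin (L - 1)) : (L : ℤ) + (j : ℕ) + 1 < a M := by omega
  have hvisit (j : Fin (L - 1)) :=
    apply_lastVisit (step_le_add_one_of_abs_sub_eq_one hstep) M.zero_le (hstart j)
      (by linarith [hend j])
  have hjump (j : Fin (L - 1)) := lastVisit_double_jump hstep M.zero_le (hstart j) (hend j)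
  refine ⟨fun j => lastVisit a M ((L : ℤ) + (j : ℕ)), fun i j hij => ?_, fun j => (hjump j).1,
    fun j => ⟨hvisit j, (hjump j).2⟩⟩
  exact lastVisit_lt_lastVisit hstep M.zero_le (hstart i) (by simpa using hij)
    (by linarith [hend j])

/-- A nearest-neighbor (±1) integer path from level `L` to level `2L` must
perform at least `L − 1` double jumps upward, one from level `L + j − 1`
through `L + j` to `L + j + 1` for each `j = 1,…,L−1` (indexed here by
`j' = j − 1 ∈ Fin (L−1)`), occurring at strictly increasing steps
`m₁ < … < m_{L−1} ≤ M − 2`. -/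
theorem double_jumps_upward_exist
    (L M : ℕ) (hL : 2 ≤ L) (hM : 2 ≤ M) (a : ℕ → ℤ)
    (hstep : ∀ k, k < M → |a (k + 1) - a k| = 1)
    (h0 : a 0 = (L : ℤ)) (hMval : a M = 2 * (L : ℤ)) :
    ∃ m : Fin (L - 1) → ℕ, StrictMono m ∧ (∀ j, m j + 2 ≤ M) ∧
      ∀ j : Fin (L - 1),
        a (m j) = (L : ℤ) + (j : ℕ) ∧
        a (m j + 1) = (L : ℤ) + (j : ℕ) + 1 ∧
        a (m j + 2) = (L : ℤ) + (j : ℕ) + 2 :=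
  double_jumps_upward_exist_general L M a hstep h0 hMval
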